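/- With the notation of the previous statement (Sigma complete smooth fan with P(Sigma) convex), the interior integer points of the cone C(Atilde) satisfy Int(C(Atilde)) ∩ Z^{n+1} = (1,0) + (C(Atilde) ∩ Z^{n+1}); equivalently, the map x ↦ x + (1,0) is a bijection from C(Atilde) ∩ Z^{n+1} onto Int(C(Atilde)) ∩ Z^{n+1}. -/

import Mathlib

/-!
Write points of `ℝ^{n+1}` as `(t, v)`; then `(t, v) ∈ C(Ã)` iff `v = ∑ dᵢ aᵢ` with `d ≥ 0` and
`∑ dᵢ ≤ t`.

If an integer point `(t, v)` is interior, then `(t - ε, v) ∈ C(Ã)` for some `ε > 0`. Convexity of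
`P(Σ)` puts `v / (t - ε)` into a single simplex `conv(0, aᵢ : i ∈ σ)`, so `v` is a nonnegative
combination of the rays of one cone `σ` with coefficient sum `≤ t - ε`. As `σ` is unimodular, these
coefficients are integers; their sum is `< t`, hence `≤ t - 1`, i.e. `(t - 1, v) ∈ C(Ã)`.

Conversely, completeness gives a relation `∑ ρᵢ aᵢ = 0` with all `ρᵢ > 0`, so `(1, 0)` is a strictly
positive combination of the `ãᵢ`. Since the `ãᵢ` span `ℝ^{n+1}`, strictly positive combinations are
interior points of `C(Ã)` (open mapping), and hence so is `(1, 0) + y` for every `y ∈ C(Ã)`.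
-/

/-- The extended vectors `ã_0 = (1,0)`, `ã_i = (1, a_i)` in `ℤ^{n+1}`. -/
def atilde {n m : ℕ} (a : Fin m → Fin n → ℤ) : Option (Fin m) → Fin (n + 1) → ℤ :=
  fun o => Fin.cons 1 (fun j => Option.elim o 0 (fun i => a i j))

open Finset Set Filter Topology

def nonnegCombinations {ι E : Type*} [Fintype ι] [AddCommMonoid E] [Module ℝ E] (v : ι → E) :
    Set E :=
  {y | ∃ c : ι → ℝ, (∀ i, 0 ≤ c i) ∧ y = ∑ i, c i • v i}

section Convex

variable {ι E : Type*} [Fintype ι] [AddCommGroup E] [Module ℝ E]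

theorem Convex.sum_smul_mem_of_zero_mem {s : Set E} (hs : Convex ℝ s) (h0 : (0 : E) ∈ s)
    {v : ι → E} (hv : ∀ i, v i ∈ s) {c : ι → ℝ} (hc : ∀ i, 0 ≤ c i) (hc1 : ∑ i, c i ≤ 1) :
    ∑ i, c i • v i ∈ s := by
  have h := hs.sum_mem (t := univ) (w := fun o : Option ι => o.elim (1 - ∑ i, c i) c)
    (z := fun o => o.elim 0 v) (by rintro (_ | i) - <;> simp [hc, hc1])
    (by simp [Fintype.sum_option]) (by rintro (_ | i) - <;> simp [h0, hv])
  simpa [Fintype.sum_option] using h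

theorem exists_of_mem_convexHull_insert_zero_image {v : ι → E} {σ : Finset ι} {x : E}
    (hx : x ∈ convexHull ℝ (insert 0 (v '' σ))) :
    ∃ c : ι → ℝ, (∀ i, 0 ≤ c i) ∧ (∀ i ∉ σ, c i = 0) ∧ ∑ i, c i ≤ 1 ∧ x = ∑ i, c i • v i := by
  classical
  have hsub : convexHull ℝ (insert 0 (v '' σ)) ⊆ {x | ∃ c : ι → ℝ, (∀ i, 0 ≤ c i) ∧
      (∀ i ∉ σ, c i = 0) ∧ ∑ i, c i ≤ 1 ∧ x = ∑ i, c i • v i} := by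
    refine convexHull_min ?_ ?_
    · rintro _ (rfl | ⟨i, hi, rfl⟩)
      · exact ⟨0, fun _ => le_rfl, fun _ _ => rfl, by simp, by simp⟩
      · refine ⟨Pi.single i 1, fun j => ?_, fun j hj => ?_, by simp, by simp [Pi.single_apply]⟩
        · by_cases h : j = i <;> simp [h]
        · simp [show j ≠ i by rintro rfl; exact hj hi]
    · rintro _ ⟨c, hc0, hcσ, hc1, rfl⟩ _ ⟨d, hd0, hdσ, hd1, rfl⟩ α β hα hβ hαβ
      refine ⟨α • c + β • d, fun i => ?_, fun i hi => by simp [hcσ i hi, hdσ i hi], ?_, ?_⟩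
      · simp only [Pi.add_apply, Pi.smul_apply, smul_eq_mul]
        exact add_nonneg (mul_nonneg hα (hc0 i)) (mul_nonneg hβ (hd0 i))
      · simp only [Pi.add_apply, Pi.smul_apply, smul_eq_mul, sum_add_distrib, ← mul_sum]
        nlinarith
      · simp only [Pi.add_apply, Pi.smul_apply, smul_eq_mul, smul_sum, add_smul, mul_smul,
          sum_add_distrib]
  exact hsub hx

theorem exists_combination_of_convex_biUnion_convexHull {v : ι → E} {𝒮 : Finset (Finset ι)}
    (h𝒮 : 𝒮.Nonempty) (hray : ∀ i, ∃ σ ∈ 𝒮, i ∈ σ)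
    (hconv : Convex ℝ (⋃ σ ∈ 𝒮, convexHull ℝ (insert 0 (v '' σ))))
    {d : ι → ℝ} (hd : ∀ i, 0 ≤ d i) :
    ∃ σ ∈ 𝒮, ∃ c : ι → ℝ, (∀ i, 0 ≤ c i) ∧ (∀ i ∉ σ, c i = 0) ∧
      ∑ i, c i ≤ ∑ i, d i ∧ ∑ i, d i • v i = ∑ i, c i • v i := by
  obtain ⟨σ₀, hσ₀⟩ := h𝒮
  have hs0 : 0 ≤ ∑ i, d i := sum_nonneg fun i _ => hd i
  generalize hs_def : ∑ i, d i = s at hs0 ⊢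
  rcases hs0.eq_or_lt with rfl | hs
  · have hd0 : ∀ i, d i = 0 := fun i =>
      (sum_eq_zero_iff_of_nonneg fun i _ => hd i).1 hs_def i (mem_univ i)
    exact ⟨σ₀, hσ₀, 0, fun _ => le_rfl, fun _ _ => rfl, by simp, by simp [hd0]⟩
  have h0 : (0 : E) ∈ ⋃ σ ∈ 𝒮, convexHull ℝ (insert 0 (v '' σ)) :=
    mem_iUnion₂.2 ⟨σ₀, hσ₀, subset_convexHull ℝ _ (mem_insert _ _)⟩
  have hv : ∀ i, v i ∈ ⋃ σ ∈ 𝒮, convexHull ℝ (insert 0 (v '' σ)) := fun i =>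
    let ⟨σ, hσ, hi⟩ := hray i
    mem_iUnion₂.2 ⟨σ, hσ, subset_convexHull ℝ _ (mem_insert_of_mem _ ⟨i, hi, rfl⟩)⟩
  have hmem := hconv.sum_smul_mem_of_zero_mem h0 hv (c := fun i => d i / s)
    (fun i => div_nonneg (hd i) hs.le) (by rw [← sum_div, hs_def, div_self hs.ne'])
  obtain ⟨σ, hσ, hx⟩ := mem_iUnion₂.1 hmem
  obtain ⟨c, hc0, hcσ, hc1, hc⟩ := exists_of_mem_convexHull_insert_zero_image hx
  refine ⟨σ, hσ, s • c, fun i => mul_nonneg hs.le (hc0 i), fun i hi => by simp [hcσ i hi], ?_, ?_⟩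
  · simp only [Pi.smul_apply, smul_eq_mul, ← mul_sum]
    nlinarith
  · calc ∑ i, d i • v i = s • ∑ i, (d i / s) • v i := by
          simp only [smul_sum, smul_smul, mul_div_cancel₀ _ hs.ne']
      _ = ∑ i, (s • c) i • v i := by simp only [hc, smul_sum, smul_smul, Pi.smul_apply, smul_eq_mul]

end Convex

section Topology

variable {E : Type*} [AddCommGroup E] [Module ℝ E] [TopologicalSpace E]
  [IsTopologicalAddGroup E] [ContinuousSMul ℝ E]

theorem exists_pos_sub_smul_mem_of_mem_interior {s : Set E} {x : E} (hx : x ∈ interior s)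
    (w : E) : ∃ ε : ℝ, 0 < ε ∧ x - ε • w ∈ s := by
  have hcont : Continuous fun ε : ℝ => x - ε • w := by fun_prop
  have hev : ∀ᶠ ε in 𝓝[>] (0 : ℝ), x - ε • w ∈ s :=
    nhdsWithin_le_nhds <| (hcont.tendsto' 0 x (by simp)).eventually
      (mem_interior_iff_mem_nhds.1 hx)
  obtain ⟨ε, hε, hεpos⟩ := (hev.and self_mem_nhdsWithin).exists
  exact ⟨ε, hεpos, hε⟩

theorem sum_smul_mem_interior_nonnegCombinations [T2Space E] [FiniteDimensional ℝ E]
    {ι : Type*} [Fintype ι] {v : ι → E} (hv : Function.Surjective (Fintype.linearCombination ℝ v))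
    {r : ι → ℝ} (hr : ∀ i, 0 < r i) :
    ∑ i, r i • v i ∈ interior (nonnegCombinations v) := by
  have hopen : IsOpen {c : ι → ℝ | ∀ i, 0 < c i} := by
    simpa only [ofPred_forall] using
      isOpen_iInter_of_finite fun i => isOpen_lt continuous_const (continuous_apply i)
  refine mem_interior.2 ⟨_, ?_, LinearMap.isOpenMap_of_finiteDimensional _ hv _ hopen,
    r, hr, Fintype.linearCombination_apply ℝ v r⟩
  rintro _ ⟨c, hc, rfl⟩
  exact ⟨c, fun i => (hc i).le, Fintype.linearCombination_apply ℝ v c⟩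

end Topology

theorem Module.Basis.repr_eq_of_intCast_eq_sum_smul {ι : Type*} [Fintype ι] {n : ℕ}
    (b : Module.Basis ι ℤ (Fin n → ℤ)) {u : Fin n → ℤ} {c : ι → ℝ}
    (hu : (fun k => (u k : ℝ)) = ∑ j, c j • fun k => (b j k : ℝ)) (i : ι) :
    c i = b.repr u i := by
  classical
  set w : Fin n → ℝ := fun k => (b.coord i (fun l => if k = l then 1 else 0) : ℝ)
  have hw : ∀ u' : Fin n → ℤ, w ⬝ᵥ (fun k => (u' k : ℝ)) = b.coord i u' := by
    intro u'
    rw [LinearMap.pi_apply_eq_sum_univ (b.coord i) u']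
    simp [w, dotProduct, mul_comm]
  calc c i = ∑ j, c j * (Finsupp.single j 1 i : ℤ) := by simp [Finsupp.single_apply]
    _ = ∑ j, c j * w ⬝ᵥ (fun k => (b j k : ℝ)) := by simp [hw]
    _ = w ⬝ᵥ ∑ j, c j • fun k => (b j k : ℝ) := by simp [dotProduct_sum, dotProduct_smul]
    _ = b.repr u i := by rw [← hu, hw, Module.Basis.coord_apply]

theorem exists_intCast_eq_of_linearIndependent_of_span_eq_top {n m : ℕ} {a : Fin m → Fin n → ℤ}
    {σ : Finset (Fin m)}
    (hli : LinearIndependent ℤ (fun i : {i // i ∈ σ} => a i.1))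
    (hsp : Submodule.span ℤ (a '' ↑σ) = ⊤) {u : Fin n → ℤ} {c : Fin m → ℝ}
    (hcσ : ∀ i ∉ σ, c i = 0) (hu : (fun k => (u k : ℝ)) = ∑ i, c i • fun k => (a i k : ℝ))
    (i : Fin m) : ∃ z : ℤ, c i = z := by
  by_cases hi : i ∈ σ
  · have hsp' : ⊤ ≤ Submodule.span ℤ (Set.range fun i : {i // i ∈ σ} => a i.1) := by
      rw [← hsp, Set.image_eq_range]
      rfl
    let b := Module.Basis.mk hli hsp'
    refine ⟨b.repr u ⟨i, hi⟩, b.repr_eq_of_intCast_eq_sum_smul (c := fun j => c j) ?_ ⟨i, hi⟩⟩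
    rw [hu, ← sum_subset (subset_univ σ) fun j _ hj => by simp [hcσ j hj], ← sum_coe_sort σ]
    simp [b]
  · exact ⟨0, by simp [hcσ i hi]⟩

theorem exists_int_combination_of_smooth_fan {n m : ℕ} {a : Fin m → Fin n → ℤ}
    {𝒮 : Finset (Finset (Fin m))} (h𝒮 : 𝒮.Nonempty) (hray : ∀ i : Fin m, ∃ σ ∈ 𝒮, i ∈ σ)
    (hsmooth : ∀ σ ∈ 𝒮,
      LinearIndependent ℤ (fun i : {i // i ∈ σ} => a i.1) ∧
        Submodule.span ℤ (a '' ↑σ) = ⊤)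
    (hconv : Convex ℝ (⋃ σ ∈ 𝒮,
      convexHull ℝ (insert (0 : Fin n → ℝ) ((fun i => fun k => ((a i k : ℝ))) '' ↑σ))))
    {u : Fin n → ℤ} {d : Fin m → ℝ} (hd : ∀ i, 0 ≤ d i)
    (hu : (fun k => (u k : ℝ)) = ∑ i, d i • fun k => (a i k : ℝ)) :
    ∃ z : Fin m → ℤ, (∀ i, 0 ≤ z i) ∧ ((∑ i, z i : ℤ) : ℝ) ≤ ∑ i, d i ∧
      (fun k => (u k : ℝ)) = ∑ i, (z i : ℝ) • fun k => (a i k : ℝ) := by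
  obtain ⟨σ, hσ, c, hc, hcσ, hcd, hdc⟩ :=
    exists_combination_of_convex_biUnion_convexHull h𝒮 hray hconv hd
  obtain ⟨hli, hsp⟩ := hsmooth σ hσ
  choose z hz using
    exists_intCast_eq_of_linearIndependent_of_span_eq_top hli hsp hcσ (hu.trans hdc)
  refine ⟨z, fun i => by exact_mod_cast hz i ▸ hc i, by push_cast; simpa [← hz] using hcd, ?_⟩
  simpa [← hz] using hu.trans hdc

section Atilde

variable {n m : ℕ} {a : Fin m → Fin n → ℤ}

theorem sum_smul_atilde (c : Option (Fin m) → ℝ) :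
    ∑ o, c o • (fun k => (atilde a o k : ℝ)) =
      Fin.cons (∑ o, c o) (∑ i, c (some i) • fun k => (a i k : ℝ)) := by
  funext k
  refine Fin.cases ?_ (fun k => ?_) k <;> simp [atilde, Finset.sum_apply, Fintype.sum_option]

theorem mem_nonnegCombinations_atilde_iff {y : Fin (n + 1) → ℝ} :
    y ∈ nonnegCombinations (fun o k => (atilde a o k : ℝ)) ↔
      ∃ d : Fin m → ℝ, (∀ i, 0 ≤ d i) ∧ ∑ i, d i ≤ y 0 ∧
        Fin.tail y = ∑ i, d i • fun k => (a i k : ℝ) := by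
  constructor
  · rintro ⟨c, hc, rfl⟩
    refine ⟨fun i => c (some i), fun i => hc _, ?_, ?_⟩
    · rw [sum_smul_atilde, Fin.cons_zero, Fintype.sum_option]
      linarith [hc none]
    · rw [sum_smul_atilde, Fin.tail_cons]
  · rintro ⟨d, hd, hdy, hdtail⟩
    refine ⟨fun o => o.elim (y 0 - ∑ i, d i) d, ?_, ?_⟩
    · rintro (_ | i)
      · simpa using hdy
      · exact hd i
    · rw [sum_smul_atilde, ← Fin.cons_self_tail y]
      simp [Fintype.sum_option, hdtail]

theorem surjective_linearCombination_atilde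
    (ha : ∀ x, x ∈ nonnegCombinations fun i k => (a i k : ℝ)) :
    Function.Surjective (Fintype.linearCombination ℝ fun o k => (atilde a o k : ℝ)) := by
  intro y
  obtain ⟨d, -, hd⟩ := ha (Fin.tail y)
  refine ⟨fun o => o.elim (y 0 - ∑ i, d i) d, ?_⟩
  rw [Fintype.linearCombination_apply, sum_smul_atilde, ← Fin.cons_self_tail y]
  simp [Fintype.sum_option, hd]

theorem exists_pos_sum_smul_atilde_eq_cons_one_zero
    (ha : ∀ x, x ∈ nonnegCombinations fun i k => (a i k : ℝ)) :
    ∃ r : Option (Fin m) → ℝ, (∀ o, 0 < r o) ∧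
      ∑ o, r o • (fun k => (atilde a o k : ℝ)) = Fin.cons 1 0 := by
  obtain ⟨q, hq, hqa⟩ := ha (-∑ i, fun k => (a i k : ℝ))
  -- `1 + q` is a positive relation among the `a i`, rescaled so that the weights sum to `1`.
  set R := ∑ i, (1 + q i)
  have hR : 0 < R + 1 := by
    have : 0 ≤ R := sum_nonneg fun i _ => by linarith [hq i]
    linarith
  refine ⟨fun o => o.elim (1 / (R + 1)) fun i => (1 + q i) / (R + 1), ?_, ?_⟩
  · rintro (_ | i)
    · simpa using hR
    · simpa using div_pos (by linarith [hq i]) hR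
  · have hrel : ∑ i, (1 + q i) • (fun k => (a i k : ℝ)) = 0 := by
      simp [add_smul, sum_add_distrib, ← hqa]
    have hsum : 1 / (R + 1) + ∑ i, (1 + q i) / (R + 1) = 1 := by
      rw [← sum_div, ← add_div, add_comm, div_self hR.ne']
    rw [sum_smul_atilde, Fintype.sum_option]
    simp only [Option.elim]
    rw [hsum]
    simp only [div_eq_inv_mul, mul_smul, ← smul_sum, hrel, smul_zero]

theorem cons_one_zero_add_mem_interior_atilde
    (ha : ∀ x, x ∈ nonnegCombinations fun i k => (a i k : ℝ)) {y : Fin (n + 1) → ℝ}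
    (hy : y ∈ nonnegCombinations fun o k => (atilde a o k : ℝ)) :
    Fin.cons 1 0 + y ∈ interior (nonnegCombinations fun o k => (atilde a o k : ℝ)) := by
  obtain ⟨c, hc, rfl⟩ := hy
  obtain ⟨r, hr, hr1⟩ := exists_pos_sum_smul_atilde_eq_cons_one_zero ha
  rw [← hr1, ← sum_add_distrib]
  simp only [← add_smul]
  exact sum_smul_mem_interior_nonnegCombinations (surjective_linearCombination_atilde ha)
    fun o => add_pos_of_pos_of_nonneg (hr o) (hc o)

theorem intCast_sub_cons_one_zero_mem_of_mem_interior {𝒮 : Finset (Finset (Fin m))}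
    (h𝒮 : 𝒮.Nonempty) (hray : ∀ i : Fin m, ∃ σ ∈ 𝒮, i ∈ σ)
    (hsmooth : ∀ σ ∈ 𝒮,
      LinearIndependent ℤ (fun i : {i // i ∈ σ} => a i.1) ∧
        Submodule.span ℤ (a '' ↑σ) = ⊤)
    (hconv : Convex ℝ (⋃ σ ∈ 𝒮,
      convexHull ℝ (insert (0 : Fin n → ℝ) ((fun i => fun k => ((a i k : ℝ))) '' ↑σ))))
    {x : Fin (n + 1) → ℤ}
    (hx : (fun k => (x k : ℝ)) ∈ interior (nonnegCombinations fun o k => (atilde a o k : ℝ))) :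
    (fun k => ((x - Fin.cons 1 0 : Fin (n + 1) → ℤ) k : ℝ)) ∈
      nonnegCombinations fun o k => (atilde a o k : ℝ) := by
  obtain ⟨ε, hε, hxε⟩ := exists_pos_sub_smul_mem_of_mem_interior hx (Fin.cons 1 0)
  obtain ⟨d, hd, hdx, hdtail⟩ := mem_nonnegCombinations_atilde_iff.1 hxε
  obtain ⟨z, hz, hzd, hzx⟩ := exists_int_combination_of_smooth_fan h𝒮 hray hsmooth hconv
    (u := Fin.tail x) hd (by rw [← hdtail]; funext k; simp [Fin.tail])
  have hzx0 : ∑ i, z i ≤ x 0 - 1 := by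
    have : ((∑ i, z i : ℤ) : ℝ) < x 0 := by
      simp only [Pi.sub_apply, Pi.smul_apply, Fin.cons_zero, smul_eq_mul, mul_one] at hdx
      linarith
    exact Int.le_sub_one_of_lt (by exact_mod_cast this)
  refine mem_nonnegCombinations_atilde_iff.2
    ⟨fun i => z i, fun i => Int.cast_nonneg (hz i), ?_, ?_⟩
  · simp only [Pi.sub_apply, Fin.cons_zero, Int.cast_sub, Int.cast_one]
    exact_mod_cast hzx0
  · rw [← hzx]
    funext k
    simp [Fin.tail]

end Atilde

theorem stmt4_general (n m : ℕ) (a : Fin m → Fin n → ℤ)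
    (𝒮 : Finset (Finset (Fin m)))
    (hray : ∀ i : Fin m, ∃ σ ∈ 𝒮, i ∈ σ)
    (hcomplete : ∀ x : Fin n → ℝ, ∃ σ ∈ 𝒮, ∃ c : Fin m → ℝ,
      (∀ i, 0 ≤ c i) ∧ (∀ i, i ∉ σ → c i = 0) ∧
        x = ∑ i, c i • (fun k => ((a i k : ℝ))))
    (hsmooth : ∀ σ ∈ 𝒮,
      LinearIndependent ℤ (fun i : {i // i ∈ σ} => a i.1) ∧
        Submodule.span ℤ (a '' ↑σ) = ⊤)
    (hconv : Convex ℝ (⋃ σ ∈ 𝒮,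
      convexHull ℝ (insert (0 : Fin n → ℝ) ((fun i => fun k => ((a i k : ℝ))) '' ↑σ)))) :
    ∀ x : Fin (n + 1) → ℤ,
      ((fun k => ((x k : ℝ))) ∈ interior
        {y : Fin (n + 1) → ℝ | ∃ c : Option (Fin m) → ℝ, (∀ o, 0 ≤ c o) ∧
          y = ∑ o, c o • (fun k => ((atilde a o k : ℝ)))})
      ↔ ∃ y : Fin (n + 1) → ℤ,
          ((fun k => ((y k : ℝ))) ∈
            {y' : Fin (n + 1) → ℝ | ∃ c : Option (Fin m) → ℝ, (∀ o, 0 ≤ c o) ∧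
              y' = ∑ o, c o • (fun k => ((atilde a o k : ℝ)))})
          ∧ x = Fin.cons 1 0 + y := by
  have ha : ∀ x, x ∈ nonnegCombinations fun i k => (a i k : ℝ) := fun x =>
    let ⟨_, _, c, hc, _, hx⟩ := hcomplete x
    ⟨c, hc, hx⟩
  have h𝒮 : 𝒮.Nonempty := let ⟨σ, hσ, _⟩ := hcomplete 0; ⟨σ, hσ⟩
  intro x
  change _ ∈ interior (nonnegCombinations _) ↔ ∃ y, _ ∈ nonnegCombinations _ ∧ _
  constructor
  · intro hx
    exact ⟨x - Fin.cons 1 0,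
      intCast_sub_cons_one_zero_mem_of_mem_interior h𝒮 hray hsmooth hconv hx,
      (add_sub_cancel _ _).symm⟩
  · rintro ⟨y, hy, rfl⟩
    have hcast : (fun k => (((Fin.cons 1 0 + y : Fin (n + 1) → ℤ) k : ℤ) : ℝ)) =
        Fin.cons 1 0 + fun k => (y k : ℝ) := by
      funext k
      refine Fin.cases ?_ (fun k => ?_) k <;> simp
    rw [hcast]
    exact cons_one_zero_add_mem_interior_atilde ha hy

/-- For a complete smooth fan with `P(Σ)` convex, the interior integer points of the cone
`C(Ã)` are exactly `(1,0)` plus the integer points of `C(Ã)`: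
`Int(C(Ã)) ∩ ℤ^{n+1} = (1,0) + (C(Ã) ∩ ℤ^{n+1})`. -/
theorem stmt4 (n m : ℕ) (a : Fin m → Fin n → ℤ)
    (𝒮 : Finset (Finset (Fin m)))
    (hcard : ∀ σ ∈ 𝒮, σ.card = n)
    (hray : ∀ i : Fin m, ∃ σ ∈ 𝒮, i ∈ σ)
    (hcomplete : ∀ x : Fin n → ℝ, ∃ σ ∈ 𝒮, ∃ c : Fin m → ℝ,
      (∀ i, 0 ≤ c i) ∧ (∀ i, i ∉ σ → c i = 0) ∧
        x = ∑ i, c i • (fun k => ((a i k : ℝ))))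
    (hsmooth : ∀ σ ∈ 𝒮,
      LinearIndependent ℤ (fun i : {i // i ∈ σ} => a i.1) ∧
        Submodule.span ℤ (a '' ↑σ) = ⊤)
    (hconv : Convex ℝ (⋃ σ ∈ 𝒮,
      convexHull ℝ (insert (0 : Fin n → ℝ) ((fun i => fun k => ((a i k : ℝ))) '' ↑σ)))) :
    ∀ x : Fin (n + 1) → ℤ,
      ((fun k => ((x k : ℝ))) ∈ interior
        {y : Fin (n + 1) → ℝ | ∃ c : Option (Fin m) → ℝ, (∀ o, 0 ≤ c o) ∧
          y = ∑ o, c o • (fun k => ((atilde a o k : ℝ)))})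
      ↔ ∃ y : Fin (n + 1) → ℤ,
          ((fun k => ((y k : ℝ))) ∈
            {y' : Fin (n + 1) → ℝ | ∃ c : Option (Fin m) → ℝ, (∀ o, 0 ≤ c o) ∧
              y' = ∑ o, c o • (fun k => ((atilde a o k : ℝ)))})
          ∧ x = Fin.cons 1 0 + y :=
  stmt4_general n m a 𝒮 hray hcomplete hsmooth hconv
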